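/- For every n ≥ 1, the next term x_{n+1} of the van der Corput sequence in base 2 is the midpoint of a gap of maximal length determined by the previous terms: writing 0 = t_0 < t_1 < … < t_m < t_{m+1} = 1 for the increasing enumeration of {0, 1} ∪ {x_1, …, x_n}, there exists an index ℓ ∈ {0, …, m} such that t_{ℓ+1} − t_ℓ = max_{0 ≤ r ≤ m} (t_{r+1} − t_r) and x_{n+1} = (t_ℓ + t_{ℓ+1})/2. -/

import Mathlib

/-- The van der Corput sequence in base 2: for `i ≥ 1` written as `i = ∑ⱼ aⱼ·2ʲ`
with binary digits `aⱼ ∈ {0,1}`, its `i`-th term is `∑ⱼ aⱼ·2^{−j−1}`. -/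
noncomputable def vdc (i : ℕ) : ℝ :=
  ∑' j : ℕ, if Nat.testBit i j then ((2 : ℝ) ^ (j + 1))⁻¹ else 0

/-- reversal of the low `k` bits of `i` -/
def brev : ℕ → ℕ → ℕ
  | 0, _ => 0
  | k+1, i => (i % 2) * 2^k + brev k (i / 2)

lemma brev_lt (k i : ℕ) : brev k i < 2^k := by
  induction k generalizing i with
  | zero => simp [brev]
  | succ k ih =>
    have := ih (i / 2)
    have h2 : (i % 2) * 2^k ≤ 1 * 2^k := Nat.mul_le_mul_right _ (by omega)
    rw [one_mul] at h2
    simp only [brev, pow_succ]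
    omega

lemma brev_zero (k : ℕ) : brev k 0 = 0 := by
  induction k with
  | zero => rfl
  | succ k ih => simp [brev, ih]

lemma brev_eq_sum (k i : ℕ) :
    brev k i = ∑ j ∈ Finset.range k, if Nat.testBit i j then 2^(k-1-j) else 0 := by
  induction k generalizing i with
  | zero => simp [brev]
  | succ k ih =>
    rw [Finset.sum_range_succ' (fun j => if Nat.testBit i j then 2^(k+1-1-j) else 0) k]
    simp only [brev, ih (i / 2)]
    have hfirst : (if Nat.testBit i 0 then 2^(k+1-1-0) else 0) = (i % 2) * 2^k := by
      rw [Nat.testBit_zero]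
      rcases Nat.mod_two_eq_zero_or_one i with h | h <;> rw [h] <;> norm_num
    rw [hfirst, add_comm]
    congr 1
    apply Finset.sum_congr rfl
    intro j hj
    simp only [Finset.mem_range] at hj
    rw [← Nat.testBit_succ i j]
    have he : k + 1 - 1 - (j + 1) = k - 1 - j := by omega
    rw [he]

lemma vdc_eq_sum (k i : ℕ) (h : i < 2^k) :
    vdc i = ∑ j ∈ Finset.range k, if Nat.testBit i j then ((2:ℝ)^(j+1))⁻¹ else 0 := by
  apply tsum_eq_sum
  intro j hj
  simp only [Finset.mem_range, not_lt] at hj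
  have : i < 2^j := lt_of_lt_of_le h (Nat.pow_le_pow_right (by norm_num) hj)
  simp [Nat.testBit_lt_two_pow this]

lemma vdc_eq_brev (k i : ℕ) (h : i < 2^k) :
    vdc i = (brev k i : ℝ) / 2^k := by
  rw [vdc_eq_sum k i h, brev_eq_sum]
  push_cast
  rw [Finset.sum_div]
  apply Finset.sum_congr rfl
  intro j hj
  simp only [Finset.mem_range] at hj
  split
  · rw [eq_div_iff (by positivity : ((2:ℝ)^k) ≠ 0), inv_mul_eq_div,
      div_eq_iff (by positivity : ((2:ℝ)^(j+1)) ≠ 0)]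
    rw [← pow_add]
    congr 1
    omega
  · simp

lemma brev_inj (k : ℕ) : ∀ i i', i < 2^k → i' < 2^k → brev k i = brev k i' → i = i' := by
  induction k with
  | zero => intro i i' h h' _; omega
  | succ k ih =>
    intro i i' h h' heq
    simp only [brev] at heq
    have b1 := brev_lt k (i / 2)
    have b2 := brev_lt k (i' / 2)
    rw [pow_succ] at h h'
    have hdiv : i / 2 = i' / 2 := by
      apply ih _ _ (by omega) (by omega)
      rcases Nat.mod_two_eq_zero_or_one i with h1 | h1 <;>
        rcases Nat.mod_two_eq_zero_or_one i' with h2 | h2 <;>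
          rw [h1, h2] at heq <;> omega
    have hm : i % 2 = i' % 2 := by
      rcases Nat.mod_two_eq_zero_or_one i with h1 | h1 <;>
        rcases Nat.mod_two_eq_zero_or_one i' with h2 | h2 <;>
          rw [h1, h2] at heq <;> omega
    omega

lemma brev_surj (k : ℕ) : ∀ j, j < 2^k → ∃ i, i < 2^k ∧ brev k i = j := by
  induction k with
  | zero => intro j h; exact ⟨0, by omega, by simp [brev_zero]; omega⟩
  | succ k ih =>
    intro j h
    have hpos : 0 < 2^k := Nat.pow_pos (by norm_num)
    obtain ⟨i', hi', hrev⟩ := ih (j % 2^k) (Nat.mod_lt _ hpos)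
    have hd : j / 2^k ≤ 1 := by
      have : j / 2^k < 2 := Nat.div_lt_of_lt_mul (by rw [pow_succ] at h; omega)
      omega
    have hm := Nat.div_add_mod j (2^k)
    rcases Nat.le_one_iff_eq_zero_or_eq_one.mp hd with hc | hc <;> rw [hc] at hm
    · refine ⟨2 * i', by omega, ?_⟩
      simp only [brev]
      rw [(by omega : 2 * i' % 2 = 0), (by omega : 2 * i' / 2 = i'), hrev]
      omega
    · refine ⟨2 * i' + 1, by rw [pow_succ]; omega, ?_⟩
      simp only [brev]
      rw [(by omega : (2 * i' + 1) % 2 = 1), (by omega : (2 * i' + 1) / 2 = i'), hrev]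
      omega

lemma vdc_split (k r : ℕ) (h : r < 2^k) :
    vdc (2^k + r) = ((2:ℝ)^(k+1))⁻¹ + vdc r := by
  have hlt : 2^k + r < 2^(k+1) := by rw [pow_succ]; omega
  rw [vdc_eq_sum (k+1) _ hlt, vdc_eq_sum k r h, Finset.sum_range_succ]
  have hk : Nat.testBit (2^k + r) k = true := by
    rw [Nat.testBit_two_pow_add_eq, Nat.testBit_lt_two_pow h]; rfl
  rw [hk]
  simp only [if_true]
  rw [add_comm]
  congr 1
  apply Finset.sum_congr rfl
  intro j hj
  simp only [Finset.mem_range] at hj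
  have hbit : Nat.testBit (2^k + r) j = Nat.testBit r j := by
    have h1 : (2^k + r) % 2^k = r := by
      rw [Nat.add_mod_left, Nat.mod_eq_of_lt h]
    have h2 := Nat.testBit_mod_two_pow (2^k + r) k j
    rw [h1] at h2
    rw [h2]
    simp [hj]
  rw [hbit]

/-- The next term of the van der Corput sequence is the midpoint of a gap of maximal
length between the previous terms: if `t 0 = 0 < t 1 < … < t m < t (m+1) = 1` is the
increasing enumeration of `{0,1} ∪ {x₁, …, xₙ}`, then there is an index `ℓ ≤ m` whose
gap is of maximal length and such that `x_{n+1} = (t ℓ + t (ℓ+1))/2`. -/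
theorem vdc_next_is_midpoint_of_max_gap (n : ℕ) (hn : 1 ≤ n)
    (m : ℕ) (t : ℕ → ℝ)
    (ht0 : t 0 = 0) (ht1 : t (m + 1) = 1)
    (hmono : ∀ i, i ≤ m → t i < t (i + 1))
    (hmem : ∀ i, i ≤ m + 1 → t i ∈ ({0, 1} ∪ vdc '' Set.Icc 1 n : Set ℝ))
    (hsurj : ∀ s ∈ ({0, 1} ∪ vdc '' Set.Icc 1 n : Set ℝ), ∃ i, i ≤ m + 1 ∧ t i = s) :
    ∃ ℓ, ℓ ≤ m ∧ (∀ r, r ≤ m → t (r + 1) - t r ≤ t (ℓ + 1) - t ℓ) ∧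
      vdc (n + 1) = (t ℓ + t (ℓ + 1)) / 2 := by
  classical
  set S : Set ℝ := ({0, 1} ∪ vdc '' Set.Icc 1 n : Set ℝ) with hS
  set k := Nat.log 2 (n + 1) with hkdef
  have hk1 : 2 ^ k ≤ n + 1 := Nat.pow_log_le_self 2 (by omega)
  have hk2 : n + 1 < 2 ^ (k + 1) := Nat.lt_pow_succ_log_self (by norm_num) _
  set r := n + 1 - 2 ^ k with hrdef
  have hnr : n + 1 = 2 ^ k + r := by omega
  have hrk : r < 2 ^ k := by rw [pow_succ] at hk2; omega
  have h2kpos : (0:ℝ) < 2 ^ k := by positivity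
  set c : ℝ := ((2:ℝ) ^ k)⁻¹ with hcdef
  have hc0 : (0:ℝ) < c := by positivity
  have hc1 : (2:ℝ) ^ k * c = 1 := mul_inv_cancel₀ (ne_of_gt h2kpos)
  have hvdcc : ∀ i : ℕ, i < 2 ^ k → vdc i = (brev k i : ℝ) * c := by
    intro i hi
    rw [vdc_eq_brev k i hi, div_eq_mul_inv]
  set R := brev k r with hRdef
  have hRlt : R < 2 ^ k := brev_lt k r
  set a : ℝ := (R : ℝ) * c with hadef
  set b : ℝ := a + c with hbdef
  -- every k-dyadic grid point is in S
  have hgrid : ∀ j : ℕ, j ≤ 2 ^ k → ((j : ℝ) * c) ∈ S := by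
    intro j hj
    rcases Nat.eq_zero_or_pos j with hj0 | hj0
    · subst hj0; left; left; simp
    rcases eq_or_lt_of_le hj with hj2 | hj2
    · rw [hj2]
      left; right
      have : ((2 ^ k : ℕ) : ℝ) * c = 1 := by push_cast; exact hc1
      rw [this]; rfl
    · obtain ⟨i, hilt, hieq⟩ := brev_surj k j hj2
      have hi1 : 1 ≤ i := by
        rcases Nat.eq_zero_or_pos i with h0 | h0
        · exfalso; rw [h0, brev_zero] at hieq; omega
        · exact h0
      right
      exact ⟨i, ⟨hi1, by omega⟩, by rw [hvdcc i hilt, hieq]⟩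
  have ha : a ∈ S := hgrid R (le_of_lt hRlt)
  have hb : b ∈ S := by
    have h1 := hgrid (R + 1) (by omega)
    have heq : ((R + 1 : ℕ) : ℝ) * c = b := by push_cast; ring
    rwa [heq] at h1
  -- no point of S lies strictly between a and b
  have hsep : ∀ s ∈ S, s ≤ a ∨ b ≤ s := by
    intro s hs
    rcases hs with (hs | hs) | ⟨i, ⟨hi1, hi2⟩, rfl⟩
    · left
      rw [hs, hadef]; positivity
    · right
      rw [hs, hbdef, hadef, ← hc1]
      have hR1 : (R : ℝ) + 1 ≤ (2:ℝ) ^ k := by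
        have h2 : ((R + 1 : ℕ) : ℝ) ≤ ((2 ^ k : ℕ) : ℝ) := by exact_mod_cast hRlt
        push_cast at h2; linarith
      nlinarith
    · by_contra hcon
      push_neg at hcon
      obtain ⟨hlow, hhigh⟩ := hcon
      rcases lt_or_ge i (2 ^ k) with hik | hik
      · rw [hvdcc i hik] at hlow hhigh
        set B := brev k i with hBdef
        have h1 : (R : ℝ) < B := by
          have := (mul_lt_mul_iff_left₀ hc0).mp hlow
          exact_mod_cast this
        have h2 : (B : ℝ) < (R : ℝ) + 1 := by
          have hh : (B : ℝ) * c < ((R : ℝ) + 1) * c := by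
            rw [hbdef, hadef] at hhigh; linarith [hhigh]
          exact (mul_lt_mul_iff_left₀ hc0).mp hh
        have h1' : R < B := by exact_mod_cast h1
        have h2' : (B:ℝ) < ((R + 1 : ℕ) : ℝ) := by push_cast; linarith
        have h2'' : B < R + 1 := by exact_mod_cast h2'
        omega
      · set r' := i - 2 ^ k with hr'def
        have hir : i = 2 ^ k + r' := by omega
        have hr'r : r' < r := by omega
        have hr'k : r' < 2 ^ k := by omega
        have hhalf : ((2:ℝ) ^ (k + 1))⁻¹ = c / 2 := by
          rw [hcdef, pow_succ, mul_inv]; ring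
        rw [hir, vdc_split k r' hr'k, hvdcc r' hr'k, hhalf] at hlow hhigh
        set R' := brev k r' with hR'def
        have h1 : (2 * R : ℝ) < 2 * R' + 1 := by
          have hh : (2 * R : ℝ) * c < (2 * (R' : ℝ) + 1) * c := by
            rw [hadef] at hlow; nlinarith [hlow]
          exact (mul_lt_mul_iff_left₀ hc0).mp hh
        have h2 : (2 * R' : ℝ) + 1 < 2 * R + 2 := by
          have hh : (2 * (R' : ℝ) + 1) * c < (2 * (R : ℝ) + 2) * c := by
            rw [hbdef, hadef] at hhigh; nlinarith [hhigh]
          exact (mul_lt_mul_iff_left₀ hc0).mp hh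
        have h1' : 2 * R < 2 * R' + 1 := by exact_mod_cast h1
        have h2' : 2 * R' + 1 < 2 * R + 2 := by
          have : ((2 * R' + 1 : ℕ) : ℝ) < ((2 * R + 2 : ℕ) : ℝ) := by push_cast; linarith
          exact_mod_cast this
        have hRR : R' = R := by omega
        have : r' = r := brev_inj k r' r hr'k hrk (by rw [← hR'def, ← hRdef, hRR])
        omega
  -- the new point is the midpoint of (a, b)
  have hmid : vdc (n + 1) = (a + b) / 2 := by
    rw [hnr, vdc_split k r hrk, hvdcc r hrk, hbdef, hadef]
    have hhalf : ((2:ℝ) ^ (k + 1))⁻¹ = c / 2 := by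
      rw [hcdef, pow_succ, mul_inv]; ring
    rw [hhalf]; ring
  -- monotonicity of the enumeration
  have tmono : ∀ j, j ≤ m + 1 → ∀ i, i ≤ j → t i ≤ t j := by
    intro j
    induction j with
    | zero => intro _ i hi; interval_cases i; exact le_refl _
    | succ j ih =>
      intro hj i hi
      rcases Nat.lt_or_ge i (j + 1) with h | h
      · exact le_trans (ih (by omega) i (by omega)) (le_of_lt (hmono j (by omega)))
      · have : i = j + 1 := by omega
        rw [this]
  have tmono_lt : ∀ j, j ≤ m + 1 → ∀ i, i < j → t i < t j := by
    intro j hj i hi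
    have h1 : t i ≤ t (j - 1) := tmono (j - 1) (by omega) i (by omega)
    have h2 : t (j - 1) < t j := by
      have := hmono (j - 1) (by omega)
      have hjj : j - 1 + 1 = j := by omega
      rwa [hjj] at this
    linarith
  -- find ℓ with t ℓ = a
  obtain ⟨ℓ, hℓ1, hℓa⟩ := hsurj a ha
  have halt1 : a < 1 := by
    rw [hadef, ← hc1]
    have : (R : ℝ) < (2:ℝ) ^ k := by
      have := hRlt; exact_mod_cast (by exact_mod_cast this : ((R:ℕ):ℝ) < ((2^k : ℕ):ℝ))
    nlinarith
  have hℓm : ℓ ≤ m := by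
    by_contra hcon
    have : ℓ = m + 1 := by omega
    rw [this, ht1] at hℓa
    linarith
  -- t (ℓ+1) = b
  have htℓ1 : t (ℓ + 1) = b := by
    obtain ⟨j, hj1, hjb⟩ := hsurj b hb
    have hℓj : ℓ < j := by
      by_contra hcon
      push_neg at hcon
      have := tmono ℓ (by omega) j hcon
      rw [hjb, hℓa] at this
      rw [hbdef] at this
      linarith
    have hle : t (ℓ + 1) ≤ b := by
      rw [← hjb]; exact tmono j hj1 (ℓ + 1) (by omega)
    have hge : b ≤ t (ℓ + 1) := by
      rcases hsep (t (ℓ + 1)) (hmem (ℓ + 1) (by omega)) with h | h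
      · exfalso
        have := hmono ℓ hℓm
        rw [hℓa] at this
        linarith
      · exact h
    linarith
  have hgap : t (ℓ + 1) - t ℓ = c := by rw [htℓ1, hℓa, hbdef]; ring
  refine ⟨ℓ, hℓm, ?_, ?_⟩
  · -- all gaps are at most c
    intro q hq
    rw [hgap]
    have hq0 : 0 ≤ t q := by
      have := tmono q (by omega) 0 (by omega)
      rwa [ht0] at this
    have hq1 : t q < 1 := by
      have := tmono_lt (m + 1) (le_refl _) q (by omega)
      rwa [ht1] at this
    set J := ⌊t q * 2 ^ k⌋₊ + 1 with hJdef
    have hJle : J ≤ 2 ^ k := by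
      have hfl : ⌊t q * 2 ^ k⌋₊ < 2 ^ k := by
        rw [Nat.floor_lt (by positivity)]
        push_cast
        nlinarith
      omega
    have hlt : t q < (J : ℝ) * c := by
      have h1 : t q * 2 ^ k < (J : ℝ) := by
        have := Nat.lt_floor_add_one (t q * 2 ^ k)
        rw [hJdef]; push_cast; linarith
      calc t q = t q * 2 ^ k * c := by rw [mul_assoc, hc1, mul_one]
      _ < (J : ℝ) * c := by exact (mul_lt_mul_iff_left₀ hc0).mpr h1
    have hle : (J : ℝ) * c ≤ t q + c := by
      have h1 : (J : ℝ) ≤ t q * 2 ^ k + 1 := by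
        have := Nat.floor_le (by positivity : (0:ℝ) ≤ t q * 2 ^ k)
        rw [hJdef]; push_cast; linarith
      calc (J : ℝ) * c ≤ (t q * 2 ^ k + 1) * c := by
            exact mul_le_mul_of_nonneg_right h1 (le_of_lt hc0)
      _ = t q * (2 ^ k * c) + c := by ring
      _ = t q + c := by rw [hc1, mul_one]
    obtain ⟨j, hj1, hjg⟩ := hsurj ((J : ℝ) * c) (hgrid J hJle)
    have hqj : q < j := by
      by_contra hcon
      push_neg at hcon
      have := tmono q (by omega) j hcon
      rw [hjg] at this
      linarith
    have : t (q + 1) ≤ (J : ℝ) * c := by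
      rw [← hjg]; exact tmono j hj1 (q + 1) (by omega)
    linarith
  · rw [hℓa, htℓ1, hmid]
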